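/- Let b ≥ 2 and N ≥ 1 be integers and x a real number. Then the matrix exponential satisfies exp(X_{b,N}(x)) = S_{b,N}(x). -/

import Mathlib

/-!
Both `S_{b,N}(x)` and `X_{b,N}(x)` are built from their `N = 1` versions by Kronecker products and
Kronecker sums, and `exp (A ⊗ 1 + 1 ⊗ B) = exp A ⊗ exp B` since the two summands commute, so it
suffices to treat `N = 1`. There `S_{b,1}(x)` is the lower triangular Toeplitz matrix of the
sequence `multichoose x k = binom(x+k-1, k)`, so the Chu–Vandermonde identity makes
`x ↦ S_{b,1}(x)` a one-parameter group. Its derivative at `0` is the Toeplitz matrix of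
`d/dx multichoose x k |_{x=0} = 1/k`, which is `X_{b,1}(1)`, and a differentiable one-parameter group
is the exponential of its generator.
-/

/-- The generalized binomial coefficient `binom(x,k) = x(x-1)⋯(x-k+1)/k!`. -/
noncomputable def binom (x : ℝ) (k : ℕ) : ℝ :=
  (∏ i ∈ Finset.range k, (x - i)) / (Nat.factorial k)

/-- The generalized Sierpinski matrix `S_{b,1}(x)`, with `(j,k)`-entry
`binom(x+j-k-1, j-k)` for `k ≤ j` and `0` otherwise. -/
noncomputable def S1 (b : ℕ) (x : ℝ) : Matrix (Fin b) (Fin b) ℝ :=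
  Matrix.of fun j k =>
    if (k : ℕ) ≤ (j : ℕ) then binom (x + ((j : ℕ) - (k : ℕ)) - 1) ((j : ℕ) - (k : ℕ)) else 0

/-- The equivalence `Fin b × Fin (b^N) ≃ Fin (b^(N+1))`, `(p, r) ↦ p·b^N + r`, used to index
Kronecker products. -/
def pke (b N : ℕ) : Fin b × Fin (b ^ N) ≃ Fin (b ^ (N + 1)) :=
  finProdFinEquiv.trans (finCongr (by ring))

open Kronecker in
/-- The generalized Sierpinski matrices `S_{b,N}(x)`, defined recursively by
`S_{b,N+1}(x) = S_{b,1}(x) ⊗ S_{b,N}(x)` (Kronecker product). -/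
noncomputable def Smat (b : ℕ) (x : ℝ) : (N : ℕ) → Matrix (Fin (b ^ N)) (Fin (b ^ N)) ℝ
  | 0 => 1
  | N + 1 => Matrix.reindex (pke b N) (pke b N) (S1 b x ⊗ₖ Smat b x N)

/-- The matrix `X_{b,1}(x)`, with `(j,k)`-entry `x/(j-k)` if `j ≥ k+1` and `0` otherwise. -/
noncomputable def X1 (b : ℕ) (x : ℝ) : Matrix (Fin b) (Fin b) ℝ :=
  Matrix.of fun j k =>
    if (k : ℕ) + 1 ≤ (j : ℕ) then x / (((j : ℕ) - (k : ℕ) : ℕ) : ℝ) else 0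

open Kronecker in
/-- The matrices `X_{b,N}(x)`, defined recursively by the Kronecker sum
`X_{b,N+1}(x) = X_{b,1}(x) ⊗ I_{b^N} + I_b ⊗ X_{b,N}(x)`. -/
noncomputable def Xmat (b : ℕ) (x : ℝ) : (N : ℕ) → Matrix (Fin (b ^ N)) (Fin (b ^ N)) ℝ
  | 0 => 0
  | N + 1 =>
      Matrix.reindex (pke b N) (pke b N)
        (X1 b x ⊗ₖ (1 : Matrix (Fin (b ^ N)) (Fin (b ^ N)) ℝ) +
          (1 : Matrix (Fin b) (Fin b) ℝ) ⊗ₖ Xmat b x N)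

open Finset Polynomial NormedSpace Kronecker
open scoped Nat

section OneParameterGroup

variable {𝕂 𝔸 : Type*} [NormedRing 𝔸] {S : 𝕂 → 𝔸} {T : 𝔸}

theorem hasDerivAt_of_map_add_eq_mul [NontriviallyNormedField 𝕂] [NormedAlgebra 𝕂 𝔸]
    (hadd : ∀ x y, S (x + y) = S x * S y) (hT : HasDerivAt S T 0) (x : 𝕂) :
    HasDerivAt S (S x * T) x :=
  ((HasDerivAt.comp_sub_const x x (by rwa [sub_self])).const_mul (S x)).congr_of_eventuallyEq
    (.of_forall fun y => by simp only [← hadd, add_sub_cancel])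

variable [RCLike 𝕂] [NormedAlgebra 𝕂 𝔸] [CompleteSpace 𝔸]

theorem mul_exp_smul_neg_eq_of_hasDerivAt (hS : ∀ y, HasDerivAt S (S y * T) y) (x : 𝕂) :
    S x * exp (x • -T) = S 0 := by
  have hderiv (y : 𝕂) : HasDerivAt (fun y => S y * exp (y • -T)) 0 y := by
    refine ((hS y).mul (hasDerivAt_exp_smul_const' (-T) y)).congr_deriv ?_
    rw [neg_mul, mul_neg, mul_assoc, add_neg_cancel]
  rw [is_const_of_deriv_eq_zero (fun y => (hderiv y).differentiableAt)
    (fun y => (hderiv y).deriv) x 0, zero_smul, exp_zero, mul_one]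

theorem eq_exp_smul_of_map_add_eq_mul (hadd : ∀ x y, S (x + y) = S x * S y) (h0 : S 0 = 1)
    (hT : HasDerivAt S T 0) (x : 𝕂) : S x = exp (x • T) := by
  have hS := mul_exp_smul_neg_eq_of_hasDerivAt (hasDerivAt_of_map_add_eq_mul hadd hT) x
  -- `exp (· • -T)` solves the same equation with `-T`, so `exp (x • -T)` has a right inverse
  have hexp := mul_exp_smul_neg_eq_of_hasDerivAt (fun y => hasDerivAt_exp_smul_const (-T) y) x
  rw [neg_neg, zero_smul, exp_zero] at hexp
  rw [← mul_one (S x), ← hexp, ← mul_assoc, hS, h0, one_mul]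

end OneParameterGroup

namespace Matrix

variable {m n o R 𝕂 𝔸 : Type*} [Fintype m] [DecidableEq m] [Fintype n] [DecidableEq n]
  [Fintype o] [DecidableEq o]

section Exp

variable [NormedRing 𝔸] [NormedAlgebra ℚ 𝔸] [CompleteSpace 𝔸]

open scoped Norms.Operator in
theorem map_exp {F : Type*} [FunLike F (Matrix m m 𝔸) (Matrix n n 𝔸)]
    [RingHomClass F (Matrix m m 𝔸) (Matrix n n 𝔸)] (f : F) (hf : Continuous f)
    (A : Matrix m m 𝔸) : f (exp A) = exp (f A) := by
  -- the operator norm induces the product uniformity, but not up to reducible unfolding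
  have : @CompleteSpace (Matrix m m 𝔸) PseudoMetricSpace.toUniformSpace :=
    inferInstanceAs (CompleteSpace (m → m → 𝔸))
  exact NormedSpace.map_exp f hf A

theorem exp_reindex (e : m ≃ n) (A : Matrix m m 𝔸) :
    exp (reindex e e A) = reindex e e (exp A) :=
  (map_exp (reindexAlgEquiv ℚ 𝔸 e) (continuous_id.matrix_reindex e e) A).symm

theorem exp_blockDiagonal_const (A : Matrix m m 𝔸) :
    exp (blockDiagonal fun _ : o => A) = blockDiagonal fun _ => exp A :=
  (map_exp ((blockDiagonalRingHom m o 𝔸).comp (Pi.constRingHom o _))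
    (continuous_pi fun _ => continuous_id).matrix_blockDiagonal A).symm

theorem exp_kronecker_one (A : Matrix m m 𝔸) :
    exp (A ⊗ₖ (1 : Matrix n n 𝔸)) = exp A ⊗ₖ (1 : Matrix n n 𝔸) := by
  rw [kronecker_one, kronecker_one, exp_blockDiagonal_const]

theorem exp_one_kronecker (B : Matrix n n 𝔸) :
    exp ((1 : Matrix m m 𝔸) ⊗ₖ B) = (1 : Matrix m m 𝔸) ⊗ₖ exp B := by
  rw [one_kronecker, one_kronecker, exp_reindex, exp_blockDiagonal_const]

end Exp

theorem exp_kroneckerSum [NormedCommRing 𝔸] [NormedAlgebra ℚ 𝔸] [CompleteSpace 𝔸]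
    (A : Matrix m m 𝔸) (B : Matrix n n 𝔸) :
    exp (A ⊗ₖ (1 : Matrix n n 𝔸) + (1 : Matrix m m 𝔸) ⊗ₖ B) = exp A ⊗ₖ exp B := by
  have hcomm : Commute (A ⊗ₖ (1 : Matrix n n 𝔸)) ((1 : Matrix m m 𝔸) ⊗ₖ B) := by
    simp only [Commute, SemiconjBy, ← mul_kronecker_mul, Matrix.one_mul, Matrix.mul_one]
  rw [exp_add_of_commute _ _ hcomm, exp_kronecker_one, exp_one_kronecker, ← mul_kronecker_mul,
    Matrix.one_mul, Matrix.mul_one]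

open scoped Norms.Operator in
theorem hasDerivAt_of_hasDerivAt_apply [RCLike 𝕂] {f : 𝕂 → Matrix m n 𝕂} {f' : Matrix m n 𝕂}
    {x : 𝕂} (h : ∀ i j, HasDerivAt (fun y => f y i j) (f' i j) x) : HasDerivAt f f' x := by
  have hsum (M : Matrix m n 𝕂) : M = ∑ i, ∑ j, M i j • single i j 1 := by
    simpa only [smul_single, smul_eq_mul, mul_one] using matrix_eq_sum_single M
  rw [hsum f', funext fun y => hsum (f y)]
  exact HasDerivAt.fun_sum fun i _ => HasDerivAt.fun_sum fun j _ => (h i j).smul_const _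

def lowerToeplitz [Zero R] (n : ℕ) (a : ℕ → R) : Matrix (Fin n) (Fin n) R :=
  of fun i j => if (j : ℕ) ≤ i then a (i - j) else 0

theorem lowerToeplitz_mul_lowerToeplitz [Semiring R] (n : ℕ) (a c : ℕ → R) :
    lowerToeplitz n a * lowerToeplitz n c =
      lowerToeplitz n fun k => ∑ ij ∈ antidiagonal k, a ij.1 * c ij.2 := by
  ext i j
  simp only [lowerToeplitz, mul_apply, of_apply, ite_mul, zero_mul, mul_ite, mul_zero]
  rw [Fin.sum_univ_eq_sum_range (fun l => if j ≤ l then if l ≤ (i : ℕ) then a (i - l) * c (l - j)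
    else 0 else 0)]
  split_ifs with hji
  · have hIcc : (range n).filter (fun l => (j : ℕ) ≤ l ∧ l ≤ (i : ℕ)) = Ico (j : ℕ) (i + 1) := by
      ext l; simp only [mem_filter, mem_range, mem_Ico]; omega
    rw [← Nat.sum_antidiagonal_swap, Nat.sum_antidiagonal_eq_sum_range_succ_mk]
    simp only [← ite_and, ← sum_filter, hIcc, sum_Ico_eq_sum_range, Prod.swap]
    refine sum_congr (by congr 1; omega) fun k hk => ?_
    rw [mem_range] at hk
    congr 2 <;> omega
  · refine sum_eq_zero fun l _ => ?_
    split_ifs <;> first | rfl | omega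

end Matrix

theorem Ring.multichoose_add {R : Type*} [CommRing R] [BinomialRing R] (r s : R) (k : ℕ) :
    multichoose (r + s) k = ∑ ij ∈ antidiagonal k, multichoose r ij.1 * multichoose s ij.2 := by
  have h := add_choose_eq k (Commute.all (-r) (-s))
  simp only [← neg_add, choose_neg', smul_mul_smul_comm, ← Int.negOnePow_add, ← Nat.cast_add] at h
  rw [Finset.sum_congr rfl fun ij hij => by rw [mem_antidiagonal.mp hij], ← smul_sum] at h
  exact smul_left_cancel_iff _ |>.mp h

theorem hasDerivAt_multichoose_zero (k : ℕ) :
    HasDerivAt (fun y : ℝ => Ring.multichoose y k) (k : ℝ)⁻¹ 0 := by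
  have hk : (fun y : ℝ => Ring.multichoose y k) = fun y => (ascPochhammer ℝ k).eval y / k ! := by
    funext y
    rw [eq_div_iff (by positivity), ← ascPochhammer_smeval_eq_eval,
      ← Ring.factorial_nsmul_multichoose_eq_ascPochhammer, nsmul_eq_mul, mul_comm]
  rw [hk]
  refine (((ascPochhammer ℝ k).hasDerivAt 0).div_const (k ! : ℝ)).congr_deriv ?_
  cases k with
  | zero => simp
  | succ k =>
    have hderiv : (derivative (ascPochhammer ℝ (k + 1))).eval 0 = k ! := by
      simp only [ascPochhammer_succ_left, derivative_mul, derivative_X, one_mul, eval_add, eval_mul,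
        eval_comp, eval_X, eval_one, zero_add, zero_mul, add_zero, ascPochhammer_eval_one]
    rw [hderiv, Nat.factorial_succ, Nat.cast_mul]
    field_simp

theorem binom_eq_choose (x : ℝ) (k : ℕ) : binom x k = Ring.choose x k := by
  rw [binom, Ring.choose_eq_smul, ← aeval_eq_smeval, aeval_def, eval₂_eq_eval_map,
    descPochhammer_map, descPochhammer_eval_eq_prod_range, smul_eq_mul, div_eq_inv_mul]

theorem S1_eq_lowerToeplitz (b : ℕ) (x : ℝ) :
    S1 b x = Matrix.lowerToeplitz b (Ring.multichoose x) := by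
  ext j k
  simp only [S1, Matrix.lowerToeplitz, Matrix.of_apply]
  split_ifs with hkj
  · rw [binom_eq_choose, Ring.multichoose_eq, Nat.cast_sub hkj]
  · rfl

-- `x / 0 = 0` in `ℝ` makes the diagonal of `X1` fit the Toeplitz pattern.
theorem X1_eq_lowerToeplitz (b : ℕ) (x : ℝ) :
    X1 b x = Matrix.lowerToeplitz b fun k => x / k := by
  ext j k
  simp only [X1, Matrix.lowerToeplitz, Matrix.of_apply]
  rcases eq_or_ne (j : ℕ) k with hjk | hjk
  · simp [hjk]
  · simp only [show (k : ℕ) + 1 ≤ j ↔ (k : ℕ) ≤ j by omega]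

theorem S1_add (b : ℕ) (x y : ℝ) : S1 b (x + y) = S1 b x * S1 b y := by
  simp only [S1_eq_lowerToeplitz, Matrix.lowerToeplitz_mul_lowerToeplitz, ← Ring.multichoose_add]

theorem S1_zero (b : ℕ) : S1 b 0 = 1 := by
  ext j k
  rw [S1_eq_lowerToeplitz, Matrix.lowerToeplitz, Matrix.of_apply, Matrix.one_apply]
  rcases lt_trichotomy j k with hjk | rfl | hkj
  · rw [if_neg (by omega), if_neg hjk.ne]
  · rw [if_pos le_rfl, if_pos rfl, Nat.sub_self, Ring.multichoose_zero_right]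
  · obtain ⟨d, hd⟩ : ∃ d, (j : ℕ) - k = d + 1 := ⟨j - k - 1, by omega⟩
    rw [if_pos (by omega), hd, Ring.multichoose_zero_succ, if_neg hkj.ne']

open scoped Matrix.Norms.Operator in
theorem hasDerivAt_S1_zero (b : ℕ) : HasDerivAt (S1 b) (X1 b 1) 0 := by
  simp only [funext (S1_eq_lowerToeplitz b), X1_eq_lowerToeplitz, one_div]
  refine Matrix.hasDerivAt_of_hasDerivAt_apply fun j k => ?_
  simp only [Matrix.lowerToeplitz, Matrix.of_apply]
  split_ifs
  · exact hasDerivAt_multichoose_zero _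
  · exact hasDerivAt_const _ _

open scoped Matrix.Norms.Operator in
theorem exp_X1 (b : ℕ) (x : ℝ) : exp (X1 b x) = S1 b x := by
  have hX : X1 b x = x • X1 b 1 := by
    ext j k
    simp [X1_eq_lowerToeplitz, Matrix.lowerToeplitz, div_eq_mul_inv]
  rw [hX]
  exact (eq_exp_smul_of_map_add_eq_mul (S1_add b) (S1_zero b) (hasDerivAt_S1_zero b) x).symm

theorem exp_Xmat_eq_Smat_general (b N : ℕ) (x : ℝ) :
    NormedSpace.exp (Xmat b x N) = Smat b x N := by
  induction N with
  | zero => exact exp_zero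
  | succ N ih => rw [Xmat, Smat, Matrix.exp_reindex, Matrix.exp_kroneckerSum, ih, exp_X1]

/-- The matrix exponential of `X_{b,N}(x)` is `S_{b,N}(x)`. -/
theorem exp_Xmat_eq_Smat (b N : ℕ) (hb : 2 ≤ b) (hN : 1 ≤ N) (x : ℝ) :
    NormedSpace.exp (Xmat b x N) = Smat b x N :=
  exp_Xmat_eq_Smat_general b N x
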